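/- arXiv:2405.06162 — 3 statements merged into one kernel-verified Lean document; each statement's English description precedes it below -/
import Mathlib

section
/- For k = 2, …, K let σ_k(t,x) = exp(h(x)ᵀY_{τ_{k−1}}) u_k(t,x), so that σ_k(τ_{k−1},x) = exp(h(x)ᵀ(Y_{τ_{k−1}} − Y_{τ_{k−2}})) σ_{k−1}(τ_{k−1},x). If σ_{k−1}(τ_{k−1},·) ∈ L⁴(B_R) and Ẽ ∫_{B_R} σ_{k−1}⁴(τ_{k−1},x) dx < ∞, then σ_k(τ_{k−1},·) ∈ L⁴(B_R), its L⁴-norm is quartic-integrable with respect to P̃, and for sufficiently small step size δ = τ_k − τ_{k−1} (e.g. δ ≤ 1/(16M²d), where M bounds |h_j| on B_R) one has Ẽ ∫_{B_R} σ_k⁴(τ_{k−1},x) dx ≤ (1 + Cδ) Ẽ ∫_{B_R} σ_{k−1}⁴(τ_{k−1},x) dx, where C > 0 depends only on d and R (one may take C = 16dM²). -/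
open Real MeasureTheory ProbabilityTheory
open scoped NNReal ENNReal

lemma aux_lintegral_prod_indep {Ω : Type*} {mΩ : MeasurableSpace Ω} {μ : Measure Ω}
    [IsProbabilityMeasure μ] {ι : Type*} (f : ι → Ω → ℝ≥0∞) (hf : ∀ i, Measurable (f i))
    (hindep : iIndepFun f μ) (s : Finset ι) :
    ∫⁻ ω, ∏ j ∈ s, f j ω ∂μ = ∏ j ∈ s, ∫⁻ ω, f j ω ∂μ := by
  classical
  induction s using Finset.induction_on with
  | empty => simp
  | @insert i s hi ih =>
    simp only [Finset.prod_insert hi]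
    have hgmeas : Measurable (fun ω => ∏ j ∈ s, f j ω) :=
      Finset.measurable_prod s (fun i _ => hf i)
    have hind : IndepFun (f i) (fun ω => ∏ j ∈ s, f j ω) μ := by
      have h2 := (hindep.indepFun_finsetProd_of_notMem hf hi).symm
      have he : (∏ j ∈ s, f j) = fun ω => ∏ j ∈ s, f j ω := funext fun ω => Finset.prod_apply ω s f
      rwa [he] at h2
    rw [lintegral_mul_eq_lintegral_mul_lintegral_of_indepFun'' (hf i).aemeasurable
      hgmeas.aemeasurable hind, ih]

lemma aux_pdf_shift {δ c : ℝ} (hδ : 0 < δ) {v : ℝ≥0} (hvδ : (v : ℝ) = δ) (y : ℝ) :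
    gaussianPDFReal 0 v y * Real.exp (c * y)
      = Real.exp (δ * c ^ 2 / 2) * gaussianPDFReal (δ * c) v y := by
  simp only [gaussianPDFReal, hvδ]
  have h1 : Real.exp (-(y - 0) ^ 2 / (2 * δ)) * Real.exp (c * y)
      = Real.exp (δ * c ^ 2 / 2) * Real.exp (-(y - δ * c) ^ 2 / (2 * δ)) := by
    rw [← Real.exp_add, ← Real.exp_add]
    congr 1
    field_simp
    ring
  rw [mul_assoc, h1]
  ring

lemma aux_mgf {Ω : Type*} [MeasureSpace Ω] [IsProbabilityMeasure (ℙ : Measure Ω)]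
    {δ : ℝ} (hδ : 0 < δ) {v : ℝ≥0} (hvδ : (v : ℝ) = δ) (hv0 : v ≠ 0)
    (X : Ω → ℝ) (hX : Measurable X) (hlaw : Measure.map X ℙ = gaussianReal 0 v) (c : ℝ) :
    ∫⁻ ω, ENNReal.ofReal (Real.exp (c * X ω)) ∂ℙ = ENNReal.ofReal (Real.exp (δ * c ^ 2 / 2)) := by
  have hfm : Measurable fun y : ℝ => ENNReal.ofReal (Real.exp (c * y)) :=
    (measurable_const.mul measurable_id).exp.ennreal_ofReal
  calc ∫⁻ ω, ENNReal.ofReal (Real.exp (c * X ω)) ∂ℙ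
      = ∫⁻ y, ENNReal.ofReal (Real.exp (c * y)) ∂(Measure.map X ℙ) :=
        (lintegral_map hfm hX).symm
    _ = ∫⁻ y, ENNReal.ofReal (Real.exp (c * y)) ∂(gaussianReal 0 v) := by rw [hlaw]
    _ = ∫⁻ y, gaussianPDF 0 v y * ENNReal.ofReal (Real.exp (c * y)) := by
        rw [gaussianReal_of_var_ne_zero 0 hv0,
          lintegral_withDensity_eq_lintegral_mul _ (measurable_gaussianPDF 0 v) hfm]
        rfl
    _ = ∫⁻ y, ENNReal.ofReal (Real.exp (δ * c ^ 2 / 2)) * gaussianPDF (δ * c) v y := by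
        congr 1; funext y
        rw [gaussianPDF, gaussianPDF, ← ENNReal.ofReal_mul (gaussianPDFReal_nonneg _ _ _),
          ← ENNReal.ofReal_mul (Real.exp_nonneg _), aux_pdf_shift hδ hvδ]
    _ = ENNReal.ofReal (Real.exp (δ * c ^ 2 / 2)) * ∫⁻ y, gaussianPDF (δ * c) v y := by
        rw [lintegral_const_mul _ (measurable_gaussianPDF _ v)]
    _ = ENNReal.ofReal (Real.exp (δ * c ^ 2 / 2)) := by
        rw [lintegral_gaussianPDF_eq_one _ hv0, mul_one]


/-- Under the reference measure, let `ξ = Y_{τ_{k−1}} − Y_{τ_{k−2}}` be an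
`N(0, δI_d)`-distributed increment (i.i.d. `N(0,δ)` coordinates), independent of the random
function `σ_{k−1}(τ_{k−1},·)`, and let `σ_k(τ_{k−1},x) = exp(h(x)ᵀξ) σ_{k−1}(τ_{k−1},x)`,
with `|hⱼ| ≤ M` on `B_R`. If `σ_{k−1}(τ_{k−1},·) ∈ L⁴(B_R)` a.s. with
`Ẽ ∫_{B_R} σ_{k−1}⁴ dx < ∞`, then the same holds for `σ_k(τ_{k−1},·)`, and for
`δ ≤ 1/(16M²d)` one has
`Ẽ ∫_{B_R} σ_k⁴(τ_{k−1},x) dx ≤ (1 + 16dM²δ) Ẽ ∫_{B_R} σ_{k−1}⁴(τ_{k−1},x) dx`. -/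
theorem statement4 {Ω : Type*} [MeasureSpace Ω] [IsProbabilityMeasure (ℙ : Measure Ω)]
    (d : ℕ) (hd : 1 ≤ d) (R δ M : ℝ) (hR : 0 < R) (hδ : 0 < δ) (hM : 0 < M)
    (h : EuclideanSpace ℝ (Fin d) → EuclideanSpace ℝ (Fin d)) (hh : ContDiff ℝ (⊤ : ℕ∞) h)
    (hhM : ∀ x ∈ Metric.closedBall (0 : EuclideanSpace ℝ (Fin d)) R, ∀ j, |h x j| ≤ M)
    (ξ : Ω → EuclideanSpace ℝ (Fin d)) (hξmeas : Measurable ξ)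
    (hξlaw : ∀ j : Fin d,
      Measure.map (fun ω => ξ ω j) ℙ = gaussianReal 0 (Real.toNNReal δ))
    (hξindep : iIndepFun (fun j ω => ξ ω j) ℙ)
    (σprev σk : Ω → EuclideanSpace ℝ (Fin d) → ℝ)
    (hσprevmeas : Measurable (Function.uncurry σprev))
    (hindep : IndepFun ξ σprev ℙ)
    (hrel : ∀ ω x, σk ω x = Real.exp (∑ j, h x j * ξ ω j) * σprev ω x)
    (hL4 : ∀ᵐ ω ∂ℙ, IntegrableOn (fun x => σprev ω x ^ 4)
      (Metric.closedBall (0 : EuclideanSpace ℝ (Fin d)) R))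
    (hEL4 : Integrable (fun ω =>
      ∫ x in Metric.closedBall (0 : EuclideanSpace ℝ (Fin d)) R, σprev ω x ^ 4) ℙ) :
    (∀ᵐ ω ∂ℙ, IntegrableOn (fun x => σk ω x ^ 4)
      (Metric.closedBall (0 : EuclideanSpace ℝ (Fin d)) R)) ∧
    Integrable (fun ω =>
      ∫ x in Metric.closedBall (0 : EuclideanSpace ℝ (Fin d)) R, σk ω x ^ 4) ℙ ∧
    (δ ≤ 1 / (16 * M ^ 2 * d) →
      (∫ ω, ∫ x in Metric.closedBall (0 : EuclideanSpace ℝ (Fin d)) R, σk ω x ^ 4 ∂ℙ)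
        ≤ (1 + 16 * d * M ^ 2 * δ) *
          ∫ ω, ∫ x in Metric.closedBall (0 : EuclideanSpace ℝ (Fin d)) R,
            σprev ω x ^ 4 ∂ℙ) := by
  classical
  set B : Set (EuclideanSpace ℝ (Fin d)) := Metric.closedBall (0 : (EuclideanSpace ℝ (Fin d))) R with hBdef
  set ν : Measure (EuclideanSpace ℝ (Fin d)) := (volume : Measure (EuclideanSpace ℝ (Fin d))).restrict B with hν
  set v : ℝ≥0 := Real.toNNReal δ with hv
  have hv0 : v ≠ 0 := by
    simp only [hv, ne_eq, Real.toNNReal_eq_zero, not_le]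
    exact hδ
  have hvδ : (v : ℝ) = δ := Real.coe_toNNReal δ hδ.le
  have hdpos : (0 : ℝ) < (d : ℝ) := by exact_mod_cast hd
  have heval : ∀ j : Fin d, Measurable fun x : (EuclideanSpace ℝ (Fin d)) => x j := fun j => (measurable_pi_apply j).comp (WithLp.measurable_ofLp (p := 2) (X := Fin d → ℝ))
  have hhmeas : ∀ j, Measurable fun x : (EuclideanSpace ℝ (Fin d)) => h x j :=
    fun j => (heval j).comp hh.continuous.measurable
  have hξj : ∀ j, Measurable fun ω => ξ ω j := fun j => (heval j).comp hξmeas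
  have hσprev2 : Measurable fun p : Ω × (EuclideanSpace ℝ (Fin d)) => σprev p.1 p.2 := hσprevmeas
  have hS : Measurable fun p : Ω × (EuclideanSpace ℝ (Fin d)) => ∑ j, h p.2 j * ξ p.1 j :=
    Finset.measurable_sum _ fun j _ =>
      ((hhmeas j).comp measurable_snd).mul ((hξj j).comp measurable_fst)
  have hσkmeas : Measurable (Function.uncurry σk) := by
    have he : Function.uncurry σk =
        fun p : Ω × (EuclideanSpace ℝ (Fin d)) => Real.exp (∑ j, h p.2 j * ξ p.1 j) * σprev p.1 p.2 := by
      funext p; exact hrel p.1 p.2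
    rw [he]; exact hS.exp.mul hσprev2
  -- pointwise quartic identity
  have hquart : ∀ ω x, σk ω x ^ 4
      = Real.exp (4 * ∑ j, h x j * ξ ω j) * σprev ω x ^ 4 := by
    intro ω x
    rw [hrel, mul_pow, ← Real.exp_nat_mul]
    norm_num
  have hofquart : ∀ ω x, ENNReal.ofReal (σk ω x ^ 4)
      = ENNReal.ofReal (Real.exp (4 * ∑ j, h x j * ξ ω j))
        * ENNReal.ofReal (σprev ω x ^ 4) := by
    intro ω x
    rw [hquart, ENNReal.ofReal_mul (Real.exp_nonneg _)]
  -- exp factor bound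
  set c₀ : ℝ≥0∞ := ENNReal.ofReal (Real.exp (8 * d * M ^ 2 * δ)) with hc₀
  have hexpfac : ∀ x : (EuclideanSpace ℝ (Fin d)), (∀ j, |h x j| ≤ M) →
      ∫⁻ ω, ENNReal.ofReal (Real.exp (4 * ∑ j, h x j * ξ ω j)) ∂ℙ ≤ c₀ := by
    intro x hx
    have hrw : ∀ ω, ENNReal.ofReal (Real.exp (4 * ∑ j, h x j * ξ ω j))
        = ∏ j, ENNReal.ofReal (Real.exp (4 * h x j * ξ ω j)) := by
      intro ω
      rw [Finset.mul_sum]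
      simp_rw [← mul_assoc]
      rw [Real.exp_sum, ENNReal.ofReal_prod_of_nonneg (fun j _ => Real.exp_nonneg _)]
    have hfj : ∀ j : Fin d, Measurable fun ω => ENNReal.ofReal (Real.exp (4 * h x j * ξ ω j)) :=
      fun j => ((measurable_const.mul (hξj j)).exp).ennreal_ofReal
    have hcind : iIndepFun
        (fun j ω => ENNReal.ofReal (Real.exp (4 * h x j * ξ ω j))) ℙ :=
      hξindep.comp (fun j y => ENNReal.ofReal (Real.exp (4 * h x j * y)))
        (fun j => ((measurable_const.mul measurable_id).exp).ennreal_ofReal)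
    calc ∫⁻ ω, ENNReal.ofReal (Real.exp (4 * ∑ j, h x j * ξ ω j)) ∂ℙ
        = ∫⁻ ω, ∏ j, ENNReal.ofReal (Real.exp (4 * h x j * ξ ω j)) ∂ℙ :=
          lintegral_congr fun ω => hrw ω
      _ = ∏ j, ∫⁻ ω, ENNReal.ofReal (Real.exp (4 * h x j * ξ ω j)) ∂ℙ :=
          aux_lintegral_prod_indep _ hfj hcind Finset.univ
      _ = ∏ j : Fin d, ENNReal.ofReal (Real.exp (δ * (4 * h x j) ^ 2 / 2)) :=
          Finset.prod_congr rfl fun j _ => aux_mgf hδ hvδ hv0 _ (hξj j) (hξlaw j) (4 * h x j)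
      _ ≤ ∏ _j : Fin d, ENNReal.ofReal (Real.exp (8 * M ^ 2 * δ)) := by
          refine Finset.prod_le_prod' fun j _ => ?_
          refine ENNReal.ofReal_le_ofReal (Real.exp_le_exp.2 ?_)
          have h2 : h x j ^ 2 ≤ M ^ 2 := by
            have := abs_le.mp (hx j)
            nlinarith
          nlinarith [hδ.le]
      _ = c₀ := by
          rw [Finset.prod_const, Finset.card_univ, Fintype.card_fin,
            ← ENNReal.ofReal_pow (Real.exp_nonneg _), ← Real.exp_nat_mul, hc₀]
          congr 1
          ring
  -- key per-x estimate
  have hkey : ∀ x ∈ B, ∫⁻ ω, ENNReal.ofReal (σk ω x ^ 4) ∂ℙ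
      ≤ c₀ * ∫⁻ ω, ENNReal.ofReal (σprev ω x ^ 4) ∂ℙ := by
    intro x hx
    have hFmeas : Measurable fun ω => ENNReal.ofReal (Real.exp (4 * ∑ j, h x j * ξ ω j)) :=
      ((measurable_const.mul (Finset.measurable_sum _ fun j _ =>
        measurable_const.mul (hξj j))).exp).ennreal_ofReal
    have hsec : Measurable fun ω => σprev ω x :=
      hσprevmeas.comp (measurable_id.prodMk measurable_const)
    have hGmeas : Measurable fun ω => ENNReal.ofReal (σprev ω x ^ 4) :=
      (hsec.pow_const 4).ennreal_ofReal
    have hind : IndepFun (fun ω => ENNReal.ofReal (Real.exp (4 * ∑ j, h x j * ξ ω j)))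
        (fun ω => ENNReal.ofReal (σprev ω x ^ 4)) ℙ := by
      have hφ : Measurable fun w : (EuclideanSpace ℝ (Fin d)) => ENNReal.ofReal (Real.exp (4 * ∑ j, h x j * w j)) :=
        ((measurable_const.mul (Finset.measurable_sum _ fun j _ =>
          measurable_const.mul (heval j))).exp).ennreal_ofReal
      have hψ : Measurable fun (f : (EuclideanSpace ℝ (Fin d)) → ℝ) => ENNReal.ofReal (f x ^ 4) :=
        ((measurable_pi_apply x).pow_const 4).ennreal_ofReal
      exact hindep.comp hφ hψ
    calc ∫⁻ ω, ENNReal.ofReal (σk ω x ^ 4) ∂ℙ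
        = ∫⁻ ω, (fun ω => ENNReal.ofReal (Real.exp (4 * ∑ j, h x j * ξ ω j))) ω
            * (fun ω => ENNReal.ofReal (σprev ω x ^ 4)) ω ∂ℙ :=
          lintegral_congr fun ω => hofquart ω x
      _ = (∫⁻ ω, ENNReal.ofReal (Real.exp (4 * ∑ j, h x j * ξ ω j)) ∂ℙ)
            * ∫⁻ ω, ENNReal.ofReal (σprev ω x ^ 4) ∂ℙ :=
          lintegral_mul_eq_lintegral_mul_lintegral_of_indepFun'' hFmeas.aemeasurable
            hGmeas.aemeasurable hind
      _ ≤ c₀ * ∫⁻ ω, ENNReal.ofReal (σprev ω x ^ 4) ∂ℙ :=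
          mul_le_mul_left (hexpfac x (hhM x hx)) _
  -- product measurability
  have hmeas_uk : Measurable fun p : Ω × (EuclideanSpace ℝ (Fin d)) => ENNReal.ofReal (σk p.1 p.2 ^ 4) :=
    (hσkmeas.pow_const 4).ennreal_ofReal
  have hmeas_up : Measurable fun p : Ω × (EuclideanSpace ℝ (Fin d)) => ENNReal.ofReal (σprev p.1 p.2 ^ 4) :=
    (hσprevmeas.pow_const 4).ennreal_ofReal
  -- Tonelli swaps
  have hswapk : ∫⁻ ω, ∫⁻ x, ENNReal.ofReal (σk ω x ^ 4) ∂ν ∂ℙ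
      = ∫⁻ x, ∫⁻ ω, ENNReal.ofReal (σk ω x ^ 4) ∂ℙ ∂ν :=
    lintegral_lintegral_swap hmeas_uk.aemeasurable
  have hswapp : ∫⁻ ω, ∫⁻ x, ENNReal.ofReal (σprev ω x ^ 4) ∂ν ∂ℙ
      = ∫⁻ x, ∫⁻ ω, ENNReal.ofReal (σprev ω x ^ 4) ∂ℙ ∂ν :=
    lintegral_lintegral_swap hmeas_up.aemeasurable
  have hBmeas : MeasurableSet B := measurableSet_closedBall
  -- main inequality at lintegral level
  have hIneq : ∫⁻ ω, ∫⁻ x, ENNReal.ofReal (σk ω x ^ 4) ∂ν ∂ℙ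
      ≤ c₀ * ∫⁻ ω, ∫⁻ x, ENNReal.ofReal (σprev ω x ^ 4) ∂ν ∂ℙ := by
    rw [hswapk, hswapp]
    have hinner : Measurable fun x => ∫⁻ ω, ENNReal.ofReal (σprev ω x ^ 4) ∂ℙ :=
      Measurable.lintegral_prod_left hmeas_up
    rw [← lintegral_const_mul c₀ hinner]
    refine lintegral_mono_ae ?_
    rw [hν]
    exact (ae_restrict_iff' hBmeas).2 (ae_of_all _ fun x hx => hkey x hx)
  -- finiteness of prev
  have hFp_nonneg : ∀ ω, 0 ≤ ∫ x, σprev ω x ^ 4 ∂ν :=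
    fun ω => integral_nonneg fun x => by positivity
  have hIp_eq : ∫⁻ ω, ∫⁻ x, ENNReal.ofReal (σprev ω x ^ 4) ∂ν ∂ℙ
      = ∫⁻ ω, ENNReal.ofReal (∫ x, σprev ω x ^ 4 ∂ν) ∂ℙ := by
    refine lintegral_congr_ae ?_
    filter_upwards [hL4] with ω hω
    rw [ofReal_integral_eq_lintegral_ofReal hω (ae_of_all _ fun x => by positivity)]
  have hIp_lt : ∫⁻ ω, ∫⁻ x, ENNReal.ofReal (σprev ω x ^ 4) ∂ν ∂ℙ < ⊤ := by
    rw [hIp_eq]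
    have he : ∀ ω, ENNReal.ofReal (∫ x, σprev ω x ^ 4 ∂ν)
        = (‖∫ x, σprev ω x ^ 4 ∂ν‖₊ : ℝ≥0∞) :=
      fun ω => (Real.enorm_eq_ofReal (hFp_nonneg ω)).symm
    simp_rw [he]
    exact hEL4.2
  have hIk_lt : ∫⁻ ω, ∫⁻ x, ENNReal.ofReal (σk ω x ^ 4) ∂ν ∂ℙ < ⊤ :=
    lt_of_le_of_lt hIneq (ENNReal.mul_lt_top (hc₀ ▸ ENNReal.ofReal_lt_top) hIp_lt)
  -- Part 1
  have hinnerk : Measurable fun ω => ∫⁻ x, ENNReal.ofReal (σk ω x ^ 4) ∂ν :=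
    Measurable.lintegral_prod_right hmeas_uk
  have hae_fin : ∀ᵐ ω ∂ℙ, ∫⁻ x, ENNReal.ofReal (σk ω x ^ 4) ∂ν < ⊤ :=
    ae_lt_top hinnerk hIk_lt.ne
  have part1 : ∀ᵐ ω ∂ℙ, IntegrableOn (fun x => σk ω x ^ 4) B := by
    filter_upwards [hae_fin] with ω hω
    have hsecm : Measurable fun x => σk ω x ^ 4 :=
      ((hσkmeas.comp (measurable_prodMk_left)).pow_const 4)
    refine ⟨hsecm.aestronglyMeasurable, ?_⟩
    have he : ∀ x : (EuclideanSpace ℝ (Fin d)), (‖σk ω x ^ 4‖₊ : ℝ≥0∞) = ENNReal.ofReal (σk ω x ^ 4) :=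
      fun x => Real.enorm_eq_ofReal (by positivity)
    show ∫⁻ x, (‖σk ω x ^ 4‖₊ : ℝ≥0∞) ∂ν < ⊤
    simp_rw [he]
    exact hω
  -- relate outer lintegral of σk to ofReal of inner integral
  have hIk_eq : ∫⁻ ω, ∫⁻ x, ENNReal.ofReal (σk ω x ^ 4) ∂ν ∂ℙ
      = ∫⁻ ω, ENNReal.ofReal (∫ x, σk ω x ^ 4 ∂ν) ∂ℙ := by
    refine lintegral_congr_ae ?_
    filter_upwards [part1] with ω hω
    rw [ofReal_integral_eq_lintegral_ofReal hω (ae_of_all _ fun x => by positivity)]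
  have hFk_nonneg : ∀ ω, 0 ≤ ∫ x, σk ω x ^ 4 ∂ν :=
    fun ω => integral_nonneg fun x => by positivity
  have hFk_meas : AEStronglyMeasurable (fun ω => ∫ x, σk ω x ^ 4 ∂ν) ℙ :=
    (StronglyMeasurable.integral_prod_right
      ((hσkmeas.pow_const 4).stronglyMeasurable)).aestronglyMeasurable
  have part2 : Integrable (fun ω => ∫ x, σk ω x ^ 4 ∂ν) ℙ := by
    refine ⟨hFk_meas, ?_⟩
    have he : ∀ ω, (‖∫ x, σk ω x ^ 4 ∂ν‖₊ : ℝ≥0∞) = ENNReal.ofReal (∫ x, σk ω x ^ 4 ∂ν) :=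
      fun ω => Real.enorm_eq_ofReal (hFk_nonneg ω)
    show ∫⁻ ω, (‖∫ x, σk ω x ^ 4 ∂ν‖₊ : ℝ≥0∞) ∂ℙ < ⊤
    simp_rw [he]
    rw [← hIk_eq]
    exact hIk_lt
  refine ⟨part1, part2, ?_⟩
  -- Part 3
  intro hδsmall
  have hFp_meas : AEStronglyMeasurable (fun ω => ∫ x, σprev ω x ^ 4 ∂ν) ℙ :=
    hEL4.1
  have hEk : ∫ ω, ∫ x, σk ω x ^ 4 ∂ν ∂ℙ
      = (∫⁻ ω, ENNReal.ofReal (∫ x, σk ω x ^ 4 ∂ν) ∂ℙ).toReal :=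
    integral_eq_lintegral_of_nonneg_ae (ae_of_all _ hFk_nonneg) hFk_meas
  have hEp : ∫ ω, ∫ x, σprev ω x ^ 4 ∂ν ∂ℙ
      = (∫⁻ ω, ENNReal.ofReal (∫ x, σprev ω x ^ 4 ∂ν) ∂ℙ).toReal :=
    integral_eq_lintegral_of_nonneg_ae (ae_of_all _ hFp_nonneg) hFp_meas
  have hexp_le : Real.exp (8 * d * M ^ 2 * δ) ≤ 1 + 16 * d * M ^ 2 * δ := by
    set y : ℝ := 8 * (d : ℝ) * M ^ 2 * δ with hy
    have hy0 : 0 ≤ y := by positivity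
    have hy2 : y ≤ 1 / 2 := by
      have hpos : (0 : ℝ) < 16 * M ^ 2 * (d : ℝ) := by positivity
      rw [le_div_iff₀ hpos] at hδsmall
      nlinarith
    have h1 : 1 - y ≤ Real.exp (-y) := by
      have := Real.add_one_le_exp (-y)
      linarith
    have h2 : Real.exp y * (1 - y) ≤ 1 := by
      have h3 := mul_le_mul_of_nonneg_left h1 (Real.exp_pos y).le
      rwa [← Real.exp_add, add_neg_cancel, Real.exp_zero] at h3
    have : Real.exp y ≤ 1 + 2 * y := by nlinarith [Real.exp_pos y]
    calc Real.exp (8 * d * M ^ 2 * δ) = Real.exp y := by rw [hy]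
      _ ≤ 1 + 2 * y := this
      _ = 1 + 16 * d * M ^ 2 * δ := by rw [hy]; ring
  -- conclude
  have hfin : c₀ * ∫⁻ ω, ENNReal.ofReal (∫ x, σprev ω x ^ 4 ∂ν) ∂ℙ ≠ ⊤ := by
    rw [← hIp_eq]
    exact (ENNReal.mul_lt_top (hc₀ ▸ ENNReal.ofReal_lt_top) hIp_lt).ne
  have hmain : (∫⁻ ω, ENNReal.ofReal (∫ x, σk ω x ^ 4 ∂ν) ∂ℙ)
      ≤ c₀ * ∫⁻ ω, ENNReal.ofReal (∫ x, σprev ω x ^ 4 ∂ν) ∂ℙ := by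
    rw [← hIk_eq, ← hIp_eq]
    exact hIneq
  calc ∫ ω, ∫ x, σk ω x ^ 4 ∂ν ∂ℙ
      = (∫⁻ ω, ENNReal.ofReal (∫ x, σk ω x ^ 4 ∂ν) ∂ℙ).toReal := hEk
    _ ≤ (c₀ * ∫⁻ ω, ENNReal.ofReal (∫ x, σprev ω x ^ 4 ∂ν) ∂ℙ).toReal :=
        ENNReal.toReal_mono hfin hmain
    _ = Real.exp (8 * d * M ^ 2 * δ)
          * (∫⁻ ω, ENNReal.ofReal (∫ x, σprev ω x ^ 4 ∂ν) ∂ℙ).toReal := by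
        rw [ENNReal.toReal_mul, hc₀, ENNReal.toReal_ofReal (Real.exp_nonneg _)]
    _ ≤ (1 + 16 * d * M ^ 2 * δ)
          * (∫⁻ ω, ENNReal.ofReal (∫ x, σprev ω x ^ 4 ∂ν) ∂ℙ).toReal :=
        mul_le_mul_of_nonneg_right hexp_le ENNReal.toReal_nonneg
    _ = (1 + 16 * d * M ^ 2 * δ) * ∫ ω, ∫ x, σprev ω x ^ 4 ∂ν ∂ℙ := by rw [hEp]
end

section
/- Let ψ(x) = log(1 + |x|^{2n}) and define 𝔉(x) = ½ Σ_{i,j=1}^d ( (∂ψ/∂x_i)(∂ψ/∂x_j) + ∂²ψ/∂x_i∂x_j ) a^{ij}(x) + Σ_{i=1}^d f_i(x) ∂ψ/∂x_i. If f: ℝ^d → ℝ^d is L-Lipschitz and |a^{ij}(x)| ≤ L for all i, j and x, then for all x ∈ ℝ^d: |𝔉(x)| ≤ d²(4n² + n)L + n(L² + 1) + n|f(0)|² + 2nL|f(0)|. -/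
/-!
`ψ` is radial: `ψ x = φ (‖x‖²)` with `φ t = log (1 + tⁿ)`, so `∂ᵢψ = 2 φ'(‖x‖²) xᵢ` and
`∂ᵢ∂ⱼψ = 4 φ''(‖x‖²) xᵢ xⱼ + 2 φ'(‖x‖²) δᵢⱼ`. For `t = r² ≥ 0` each of `φ'(t)`, `t φ'(t)`,
`r φ'(t)` is at most `n` and `t |φ''(t)| ≤ n²`, all because `tᵏ ≤ 1 + tᵐ` for `k ≤ m`.
Hence `|∂ᵢψ| ≤ 2n` and `|∂ᵢ∂ⱼψ| ≤ 4n² + 2n`, which bounds the second-order part of `𝔉` by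
`d²(4n² + n)L`. The first-order part is `2 φ'(‖x‖²) ⟪f x, x⟫`, and `‖f x‖ ≤ L‖x‖ + ‖f 0‖`
bounds it by `2n(L + ‖f 0‖) ≤ n((L + ‖f 0‖)² + 1)`.
-/

open Real

/-- The partial derivative `∂u/∂xᵢ` of a function `u : ℝ^d → ℝ`. -/
noncomputable def pd {d : ℕ} (i : Fin d) (u : EuclideanSpace ℝ (Fin d) → ℝ) :
    EuclideanSpace ℝ (Fin d) → ℝ :=
  fun x => fderiv ℝ u x (EuclideanSpace.single i 1)

lemma natCast_mul_mul_pow_sub_one (k : ℕ) (t : ℝ) : k * (t * t ^ (k - 1)) = k * t ^ k := by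
  cases k with
  | zero => simp
  | succ k => rw [Nat.add_sub_cancel, ← pow_succ']

lemma pow_le_one_add_pow {r : ℝ} (hr : 0 ≤ r) {k m : ℕ} (hkm : k ≤ m) : r ^ k ≤ 1 + r ^ m := by
  rcases le_total r 1 with hr1 | hr1
  · linarith [pow_le_one₀ hr hr1 (n := k), pow_nonneg hr m]
  · linarith [pow_le_pow_right₀ hr1 hkm]

lemma abs_sum_sum_le_card_sq_mul {ι : Type*} [Fintype ι] (b : ι → ι → ℝ) {B : ℝ}
    (hb : ∀ i j, |b i j| ≤ B) : |∑ i, ∑ j, b i j| ≤ Fintype.card ι ^ 2 * B :=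
  calc |∑ i, ∑ j, b i j| ≤ ∑ i, ∑ j, |b i j| :=
        (Finset.abs_sum_le_sum_abs _ _).trans
          (Finset.sum_le_sum fun i _ => Finset.abs_sum_le_sum_abs _ _)
    _ ≤ ∑ _i : ι, ∑ _j : ι, B := by gcongr with i _ j _; exact hb i j
    _ = Fintype.card ι ^ 2 * B := by simp [sq, mul_assoc]

lemma abs_apply_le_norm {ι : Type*} [Fintype ι] (x : EuclideanSpace ℝ ι) (i : ι) :
    |x i| ≤ ‖x‖ := by
  simpa using PiLp.norm_apply_le x i

lemma HasDerivAt.hasFDerivAt_comp_norm_sq {F : Type*} [NormedAddCommGroup F]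
    [InnerProductSpace ℝ F] {φ : ℝ → ℝ} {φ' : ℝ} {x : F} (hφ : HasDerivAt φ φ' (‖x‖ ^ 2)) :
    HasFDerivAt (fun y => φ (‖y‖ ^ 2)) ((2 * φ') • innerSL ℝ x) x := by
  refine (hφ.comp_hasFDerivAt x (hasStrictFDerivAt_norm_sq x).hasFDerivAt).congr_fderiv ?_
  ext v
  simp
  ring

section Radial

variable {d : ℕ} {φ φ' φ'' : ℝ → ℝ}

lemma pd_comp_norm_sq (hφ : ∀ t, 0 ≤ t → HasDerivAt φ (φ' t) t) (i : Fin d)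
    (x : EuclideanSpace ℝ (Fin d)) :
    pd i (fun y => φ (‖y‖ ^ 2)) x = 2 * φ' (‖x‖ ^ 2) * x i := by
  rw [pd, (hφ _ (sq_nonneg _)).hasFDerivAt_comp_norm_sq.fderiv]
  simp [EuclideanSpace.inner_single_right]

lemma pd_pd_comp_norm_sq (hφ : ∀ t, 0 ≤ t → HasDerivAt φ (φ' t) t)
    (hφ' : ∀ t, 0 ≤ t → HasDerivAt φ' (φ'' t) t) (i j : Fin d) (x : EuclideanSpace ℝ (Fin d)) :
    pd i (pd j fun y => φ (‖y‖ ^ 2)) x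
      = 4 * φ'' (‖x‖ ^ 2) * x i * x j + 2 * φ' (‖x‖ ^ 2) * (if i = j then 1 else 0) := by
  have hpd : pd j (fun y => φ (‖y‖ ^ 2)) = fun y => 2 * φ' (‖y‖ ^ 2) * y j :=
    funext (pd_comp_norm_sq hφ j)
  have hφ'x := (hφ' _ (sq_nonneg ‖x‖)).hasFDerivAt_comp_norm_sq.const_mul 2
  have hprod : HasFDerivAt (fun y : EuclideanSpace ℝ (Fin d) => 2 * φ' (‖y‖ ^ 2) * y j) _ x :=
    hφ'x.mul (EuclideanSpace.proj (𝕜 := ℝ) j).hasFDerivAt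
  rw [pd, hpd, hprod.fderiv]
  simp [EuclideanSpace.inner_single_right, eq_comm]
  ring

end Radial

noncomputable def logOneAddPowDeriv (n : ℕ) (t : ℝ) : ℝ := n * t ^ (n - 1) / (1 + t ^ n)

/-- The quotient-rule derivative of `logOneAddPowDeriv n`. The truncated exponent `n - 1 - 1`
only occurs next to the factor `(n - 1 : ℕ)`, which vanishes when it is wrong. -/
noncomputable def logOneAddPowDeriv2 (n : ℕ) (t : ℝ) : ℝ :=
  (n * ((n - 1 : ℕ) * t ^ (n - 1 - 1)) * (1 + t ^ n) - n * t ^ (n - 1) * (n * t ^ (n - 1)))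
    / (1 + t ^ n) ^ 2

section OneVariable

variable (n : ℕ) {t : ℝ}

lemma hasDerivAt_log_one_add_pow (ht : 0 ≤ t) :
    HasDerivAt (fun s => log (1 + s ^ n)) (logOneAddPowDeriv n t) t := by
  have h := ((hasDerivAt_pow n t).const_add 1).log (by positivity)
  rwa [logOneAddPowDeriv]

lemma hasDerivAt_logOneAddPowDeriv (ht : 0 ≤ t) :
    HasDerivAt (logOneAddPowDeriv n) (logOneAddPowDeriv2 n t) t :=
  ((hasDerivAt_pow (n - 1) t).const_mul (n : ℝ)).div ((hasDerivAt_pow n t).const_add 1)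
    (by positivity)

lemma logOneAddPowDeriv_nonneg (ht : 0 ≤ t) : 0 ≤ logOneAddPowDeriv n t := by
  unfold logOneAddPowDeriv; positivity

lemma logOneAddPowDeriv_le (ht : 0 ≤ t) : logOneAddPowDeriv n t ≤ n := by
  rw [logOneAddPowDeriv, div_le_iff₀ (by positivity)]
  exact mul_le_mul_of_nonneg_left (pow_le_one_add_pow ht (Nat.sub_le n 1)) n.cast_nonneg

lemma mul_logOneAddPowDeriv_le (ht : 0 ≤ t) : t * logOneAddPowDeriv n t ≤ n := by
  rw [logOneAddPowDeriv, mul_div_assoc', div_le_iff₀ (by positivity), mul_left_comm,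
    natCast_mul_mul_pow_sub_one]
  nlinarith [n.cast_nonneg (α := ℝ)]

lemma logOneAddPowDeriv_sq_mul_le {r : ℝ} (hr : 0 ≤ r) : logOneAddPowDeriv n (r ^ 2) * r ≤ n := by
  have hD := logOneAddPowDeriv_nonneg n (sq_nonneg r)
  rcases le_total r 1 with hr1 | hr1
  · nlinarith [logOneAddPowDeriv_le n (sq_nonneg r)]
  · nlinarith [mul_logOneAddPowDeriv_le n (sq_nonneg r)]

lemma mul_logOneAddPowDeriv2 (ht : 0 ≤ t) :
    t * logOneAddPowDeriv2 n t
      = logOneAddPowDeriv n t * (((n - 1 : ℕ) * (1 + t ^ n) - n * t ^ n) / (1 + t ^ n)) := by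
  have hk := natCast_mul_mul_pow_sub_one (n - 1) t
  have hn := natCast_mul_mul_pow_sub_one n t
  rw [logOneAddPowDeriv2, logOneAddPowDeriv]
  field_simp
  linear_combination (n * (1 + t ^ n)) * hk - (n * t ^ (n - 1)) * hn

lemma abs_logOneAddPowDeriv2_mul_le (ht : 0 ≤ t) : |logOneAddPowDeriv2 n t| * t ≤ n ^ 2 := by
  have hpos : 0 < 1 + t ^ n := by positivity
  have hq : |((n - 1 : ℕ) * (1 + t ^ n) - n * t ^ n) / (1 + t ^ n)| ≤ n := by
    rw [abs_div, abs_of_pos hpos, div_le_iff₀ hpos]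
    have hcast : ((n - 1 : ℕ) : ℝ) ≤ n := Nat.cast_le.mpr (Nat.sub_le n 1)
    refine abs_sub_le_of_nonneg_of_le (by positivity) (by gcongr) (by positivity) ?_
    nlinarith [n.cast_nonneg (α := ℝ)]
  calc |logOneAddPowDeriv2 n t| * t = |t * logOneAddPowDeriv2 n t| := by
        rw [abs_mul, abs_of_nonneg ht, mul_comm]
    _ = logOneAddPowDeriv n t * |((n - 1 : ℕ) * (1 + t ^ n) - n * t ^ n) / (1 + t ^ n)| := by
        rw [mul_logOneAddPowDeriv2 n ht, abs_mul, abs_of_nonneg (logOneAddPowDeriv_nonneg n ht)]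
    _ ≤ n * n := mul_le_mul (logOneAddPowDeriv_le n ht) hq (abs_nonneg _) n.cast_nonneg
    _ = n ^ 2 := (sq _).symm

end OneVariable

section LogOneAddPowNormSq

variable (n : ℕ) {d : ℕ} (x : EuclideanSpace ℝ (Fin d))

lemma pd_log_one_add_pow_norm_sq (i : Fin d) :
    pd i (fun y => log (1 + (‖y‖ ^ 2) ^ n)) x = 2 * logOneAddPowDeriv n (‖x‖ ^ 2) * x i :=
  pd_comp_norm_sq (fun _ => hasDerivAt_log_one_add_pow n) i x

lemma abs_pd_log_one_add_pow_norm_sq_le (i : Fin d) :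
    |pd i (fun y => log (1 + (‖y‖ ^ 2) ^ n)) x| ≤ 2 * n := by
  have hD := logOneAddPowDeriv_nonneg n (sq_nonneg ‖x‖)
  rw [pd_log_one_add_pow_norm_sq, abs_mul, abs_mul, abs_two, abs_of_nonneg hD, mul_assoc]
  gcongr
  exact (mul_le_mul_of_nonneg_left (abs_apply_le_norm x i) hD).trans
    (logOneAddPowDeriv_sq_mul_le n (norm_nonneg x))

lemma abs_pd_pd_log_one_add_pow_norm_sq_le (i j : Fin d) :
    |pd i (pd j fun y => log (1 + (‖y‖ ^ 2) ^ n)) x| ≤ 4 * n ^ 2 + 2 * n := by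
  have ht := sq_nonneg ‖x‖
  rw [pd_pd_comp_norm_sq (fun _ => hasDerivAt_log_one_add_pow n)
    (fun _ => hasDerivAt_logOneAddPowDeriv n)]
  have hxij : |x i * x j| ≤ ‖x‖ ^ 2 := by
    rw [abs_mul, sq]
    exact mul_le_mul (abs_apply_le_norm x i) (abs_apply_le_norm x j) (abs_nonneg _)
      (norm_nonneg x)
  have hrank_one : |4 * logOneAddPowDeriv2 n (‖x‖ ^ 2) * x i * x j| ≤ 4 * n ^ 2 := by
    rw [mul_assoc, abs_mul, abs_mul, abs_of_pos four_pos, mul_assoc]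
    gcongr
    exact (mul_le_mul_of_nonneg_left hxij (abs_nonneg _)).trans
      (abs_logOneAddPowDeriv2_mul_le n ht)
  have hdiag : |2 * logOneAddPowDeriv n (‖x‖ ^ 2) * (if i = j then 1 else 0)| ≤ 2 * n := by
    rw [abs_mul, abs_mul, abs_two, abs_of_nonneg (logOneAddPowDeriv_nonneg n ht)]
    have hδ : |(if i = j then (1 : ℝ) else 0)| ≤ 1 := by split_ifs <;> simp
    calc 2 * logOneAddPowDeriv n (‖x‖ ^ 2) * |(if i = j then (1 : ℝ) else 0)|
        ≤ 2 * n * 1 := by gcongr; exact logOneAddPowDeriv_le n ht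
      _ = 2 * n := mul_one _
  exact (abs_add_le _ _).trans (add_le_add hrank_one hdiag)

lemma abs_pd_mul_pd_add_pd_pd_log_one_add_pow_norm_sq_le (i j : Fin d) :
    |pd i (fun y => log (1 + (‖y‖ ^ 2) ^ n)) x * pd j (fun y => log (1 + (‖y‖ ^ 2) ^ n)) x
      + pd i (pd j fun y => log (1 + (‖y‖ ^ 2) ^ n)) x| ≤ 8 * n ^ 2 + 2 * n := by
  have hi := abs_pd_log_one_add_pow_norm_sq_le n x i
  have hj := abs_pd_log_one_add_pow_norm_sq_le n x j
  have hij := abs_pd_pd_log_one_add_pow_norm_sq_le n x i j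
  refine (abs_add_le _ _).trans ?_
  rw [abs_mul]
  calc _ ≤ (2 * n * (2 * n) + (4 * n ^ 2 + 2 * n) : ℝ) := by gcongr
    _ = 8 * n ^ 2 + 2 * n := by ring

lemma abs_sum_mul_pd_log_one_add_pow_norm_sq_le (v : EuclideanSpace ℝ (Fin d)) {L c : ℝ}
    (hL : 0 ≤ L) (hc : 0 ≤ c) (hv : ‖v‖ ≤ L * ‖x‖ + c) :
    |∑ i, v i * pd i (fun y => log (1 + (‖y‖ ^ 2) ^ n)) x| ≤ 2 * n * (L + c) := by
  set D := logOneAddPowDeriv n (‖x‖ ^ 2)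
  have hD : 0 ≤ D := logOneAddPowDeriv_nonneg n (sq_nonneg _)
  have hsum : ∑ i, v i * pd i (fun y => log (1 + (‖y‖ ^ 2) ^ n)) x = 2 * D * inner ℝ v x := by
    simp only [pd_log_one_add_pow_norm_sq, PiLp.inner_apply, RCLike.inner_apply, conj_trivial,
      Finset.mul_sum]
    exact Finset.sum_congr rfl fun i _ => by ring
  calc |∑ i, v i * pd i (fun y => log (1 + (‖y‖ ^ 2) ^ n)) x| = 2 * D * |inner ℝ v x| := by
        rw [hsum, abs_mul, abs_of_nonneg (by positivity)]
    _ ≤ 2 * D * ((L * ‖x‖ + c) * ‖x‖) := by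
        gcongr
        exact (abs_real_inner_le_norm v x).trans (by gcongr)
    _ = 2 * (L * (‖x‖ ^ 2 * D) + c * (D * ‖x‖)) := by ring
    _ ≤ 2 * (L * n + c * n) := by
        gcongr
        · exact mul_logOneAddPowDeriv_le n (sq_nonneg _)
        · exact logOneAddPowDeriv_sq_mul_le n (norm_nonneg x)
    _ = 2 * n * (L + c) := by ring

end LogOneAddPowNormSq

theorem statement9_general {d : ℕ} (n : ℕ) (L : ℝ) (hL : 0 < L)
    (f : EuclideanSpace ℝ (Fin d) → EuclideanSpace ℝ (Fin d))
    (a : Fin d → Fin d → EuclideanSpace ℝ (Fin d) → ℝ)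
    (hf : ∀ x y, ‖f x - f y‖ ≤ L * ‖x - y‖)
    (ha : ∀ i j x, |a i j x| ≤ L)
    (ψ 𝔉 : EuclideanSpace ℝ (Fin d) → ℝ)
    (hψ : ∀ x, ψ x = Real.log (1 + ‖x‖ ^ (2 * n)))
    (h𝔉 : ∀ x, 𝔉 x =
      (1 / 2) * ∑ i, ∑ j, (pd i ψ x * pd j ψ x + pd i (pd j ψ) x) * a i j x
        + ∑ i, f x i * pd i ψ x) :
    ∀ x, |𝔉 x| ≤ (d : ℝ) ^ 2 * (4 * (n : ℝ) ^ 2 + n) * L + n * (L ^ 2 + 1)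
        + n * ‖f 0‖ ^ 2 + 2 * n * L * ‖f 0‖ := by
  intro x
  have hψ' : ψ = fun y => log (1 + (‖y‖ ^ 2) ^ n) := funext fun y => by rw [hψ, pow_mul]
  have hfx : ‖f x‖ ≤ L * ‖x‖ + ‖f 0‖ := by
    linarith [norm_le_insert' (f x) (f 0), sub_zero x ▸ hf x 0]
  have hdiffusion : |∑ i, ∑ j, (pd i ψ x * pd j ψ x + pd i (pd j ψ) x) * a i j x|
      ≤ d ^ 2 * ((8 * n ^ 2 + 2 * n) * L) := by
    rw [hψ']
    simpa using abs_sum_sum_le_card_sq_mul _ fun i j => (abs_mul _ _).trans_le <|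
      mul_le_mul (abs_pd_mul_pd_add_pd_pd_log_one_add_pow_norm_sq_le n x i j) (ha i j x)
        (abs_nonneg _) (by positivity)
  have hdrift : |∑ i, f x i * pd i ψ x| ≤ 2 * n * (L + ‖f 0‖) :=
    hψ' ▸ abs_sum_mul_pd_log_one_add_pow_norm_sq_le n x (f x) hL.le (norm_nonneg _) hfx
  rw [h𝔉]
  calc _ ≤ |1 / 2 * ∑ i, ∑ j, (pd i ψ x * pd j ψ x + pd i (pd j ψ) x) * a i j x|
        + |∑ i, f x i * pd i ψ x| := abs_add_le _ _
    _ ≤ 1 / 2 * (d ^ 2 * ((8 * n ^ 2 + 2 * n) * L)) + 2 * n * (L + ‖f 0‖) := by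
        rw [abs_mul, abs_of_pos one_half_pos]; gcongr
    _ ≤ _ := by nlinarith [mul_nonneg n.cast_nonneg (sq_nonneg (L + ‖f 0‖ - 1))]

/-- With `ψ(x) = log(1+|x|^{2n})` and
`𝔉(x) = ½ Σᵢⱼ((∂ψ/∂xᵢ)(∂ψ/∂xⱼ) + ∂²ψ/∂xᵢ∂xⱼ) aⁱʲ(x) + Σᵢ fᵢ(x) ∂ψ/∂xᵢ`,
if `f` is `L`-Lipschitz and `|aⁱʲ(x)| ≤ L`, then
`|𝔉(x)| ≤ d²(4n²+n)L + n(L²+1) + n|f(0)|² + 2nL|f(0)|` for all `x`. -/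
theorem statement9 {d : ℕ} (n : ℕ) (hn : 1 ≤ n) (L : ℝ) (hL : 0 < L)
    (f : EuclideanSpace ℝ (Fin d) → EuclideanSpace ℝ (Fin d))
    (a : Fin d → Fin d → EuclideanSpace ℝ (Fin d) → ℝ)
    (hf : ∀ x y, ‖f x - f y‖ ≤ L * ‖x - y‖)
    (ha : ∀ i j x, |a i j x| ≤ L)
    (ψ 𝔉 : EuclideanSpace ℝ (Fin d) → ℝ)
    (hψ : ∀ x, ψ x = Real.log (1 + ‖x‖ ^ (2 * n)))
    (h𝔉 : ∀ x, 𝔉 x =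
      (1 / 2) * ∑ i, ∑ j, (pd i ψ x * pd j ψ x + pd i (pd j ψ) x) * a i j x
        + ∑ i, f x i * pd i ψ x) :
    ∀ x, |𝔉 x| ≤ (d : ℝ) ^ 2 * (4 * (n : ℝ) ^ 2 + n) * L + n * (L ^ 2 + 1)
        + n * ‖f 0‖ ^ 2 + 2 * n * L * ‖f 0‖ :=
  statement9_general n L hL f a hf ha ψ 𝔉 hψ h𝔉
end

section
/- Fix a vector y ∈ ℝ^d and define, for smooth a: ℝ^d → ℝ^{d×d}, f: ℝ^d → ℝ^d, h: ℝ^d → ℝ^d, the frozen robust-DMZ coefficients F_i(y,x) = Σ_j(∂a^{ij}/∂x_j + a^{ij} Σ_k y_k ∂h_k/∂x_j) − f_i(x) and J(y,x) = ½Σ_{i,j}∂²a^{ij}/∂x_i∂x_j + Σ_{i,j,k} y_k (∂h_k/∂x_j)(∂a^{ij}/∂x_i) + ½Σ_{i,j} a^{ij}(Σ_k y_k ∂²h_k/∂x_i∂x_j + Σ_{k,l} y_k y_l (∂h_k/∂x_i)(∂h_l/∂x_j)) − Σ_i ∂f_i/∂x_i − Σ_{i,j} y_j (∂h_j/∂x_i)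 f_i(x) − ½|h(x)|². If u(t,x) is a C^{1,2} function on an interval times an open set of ℝ^d satisfying ∂u/∂t = ½ Σ_{i,j} a^{ij}(x) ∂²u/∂x_i∂x_j + Σ_i F_i(y,x) ∂u/∂x_i + J(y,x) u, then the function ũ(t,x) = exp(h(x)ᵀy) u(t,x) satisfies the Kolmogorov-type equation ∂ũ/∂t = ½ Σ_{i,j} ∂²(a^{ij}(x)ũ)/∂x_i∂x_j − Σ_i ∂(f_i(x)ũ)/∂x_i − ½|h(x)|² ũ. -/
open Real

/-- The drift coefficient `Fᵢ(y,x)` of the robust DMZ equation with observation value frozen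
at `y`: `Fᵢ(y,x) = Σⱼ(∂aⁱʲ/∂xⱼ + aⁱʲ Σₖ yₖ ∂hₖ/∂xⱼ) − fᵢ(x)`. -/
noncomputable def Fcoef {d : ℕ}
    (a : Fin d → Fin d → EuclideanSpace ℝ (Fin d) → ℝ)
    (f h : EuclideanSpace ℝ (Fin d) → EuclideanSpace ℝ (Fin d))
    (y : EuclideanSpace ℝ (Fin d)) (i : Fin d) (x : EuclideanSpace ℝ (Fin d)) : ℝ :=
  (∑ j, (pd j (a i j) x + a i j x * ∑ k, y k * pd j (fun z => h z k) x)) - f x i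

/-- The zeroth-order coefficient `J(y,x)` of the robust DMZ equation with observation value
frozen at `y`. -/
noncomputable def Jcoef {d : ℕ}
    (a : Fin d → Fin d → EuclideanSpace ℝ (Fin d) → ℝ)
    (f h : EuclideanSpace ℝ (Fin d) → EuclideanSpace ℝ (Fin d))
    (y : EuclideanSpace ℝ (Fin d)) (x : EuclideanSpace ℝ (Fin d)) : ℝ :=
  (1 / 2) * ∑ i, ∑ j, pd i (pd j (a i j)) x
    + ∑ i, ∑ j, ∑ k, y k * pd j (fun z => h z k) x * pd i (a i j) x
    + (1 / 2) * ∑ i, ∑ j, a i j x *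
        ((∑ k, y k * pd i (pd j (fun z => h z k)) x)
          + ∑ k, ∑ l, y k * y l * pd i (fun z => h z k) x * pd j (fun z => h z l) x)
    - ∑ i, pd i (fun z => f z i) x
    - ∑ i, ∑ j, y j * pd i (fun z => h z j) x * f x i
    - (1 / 2) * ‖h x‖ ^ 2

section Helpers
variable {d : ℕ} {x : EuclideanSpace ℝ (Fin d)} {g g₁ g₂ : EuclideanSpace ℝ (Fin d) → ℝ}

lemma pd_congr (i : Fin d) (hg : g₁ =ᶠ[nhds x] g₂) : pd i g₁ x = pd i g₂ x := by
  unfold pd; rw [hg.fderiv_eq]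

lemma pd_mul (i : Fin d) (h₁ : DifferentiableAt ℝ g₁ x) (h₂ : DifferentiableAt ℝ g₂ x) :
    pd i (fun z => g₁ z * g₂ z) x = pd i g₁ x * g₂ x + g₁ x * pd i g₂ x := by
  unfold pd; rw [fderiv_fun_mul h₁ h₂]; simp; ring

lemma pd_exp (i : Fin d) (hg : DifferentiableAt ℝ g x) :
    pd i (fun z => Real.exp (g z)) x = Real.exp (g x) * pd i g x := by
  unfold pd; rw [fderiv_exp hg]; simp

lemma pd_sum {ι : Type*} (s : Finset ι) (A : ι → EuclideanSpace ℝ (Fin d) → ℝ) (i : Fin d)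
    (hA : ∀ k ∈ s, DifferentiableAt ℝ (A k) x) :
    pd i (fun z => ∑ k ∈ s, A k z) x = ∑ k ∈ s, pd i (A k) x := by
  unfold pd; rw [fderiv_fun_sum hA]; simp

lemma pd_add (i : Fin d) (h₁ : DifferentiableAt ℝ g₁ x) (h₂ : DifferentiableAt ℝ g₂ x) :
    pd i (fun z => g₁ z + g₂ z) x = pd i g₁ x + pd i g₂ x := by
  unfold pd; rw [fderiv_fun_add h₁ h₂]; simp

lemma pd_contDiffAt {n : ℕ∞} (i : Fin d) (hg : ContDiffAt ℝ (n + 1) g x) :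
    ContDiffAt ℝ n (pd i g) x :=
  (hg.fderiv_right (m := n) le_rfl).clm_apply
    (contDiffAt_const (c := EuclideanSpace.single i (1:ℝ)))

lemma pd_contDiff {n : ℕ∞} (i : Fin d) (hg : ContDiff ℝ (⊤ : ℕ∞) g) :
    ContDiff ℝ n (pd i g) :=
  (hg.fderiv_right (m := n) (by exact_mod_cast le_top)).clm_apply
    (contDiff_const (c := EuclideanSpace.single i (1:ℝ)))

lemma pd_diffAt (i : Fin d) (hg : ContDiffAt ℝ 2 g x) : DifferentiableAt ℝ (pd i g) x := by
  have h2 : ContDiffAt ℝ ((1:ℕ∞) + 1) g x := by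
    exact hg.of_le (by norm_num)
  exact ((pd_contDiffAt i h2).differentiableAt (by simp))

lemma diffAt_of_contDiffAt (hg : ContDiffAt ℝ 2 g x) : DifferentiableAt ℝ g x :=
  hg.differentiableAt (by norm_num)

lemma pd_diff (i : Fin d) (hg : ContDiff ℝ (⊤ : ℕ∞) g) : DifferentiableAt ℝ (pd i g) x :=
  (pd_contDiff (n := 1) i hg).differentiable (by simp) x

lemma pd_const (i : Fin d) (c : ℝ) : pd i (fun _ => c) x = 0 := by
  unfold pd; simp

lemma sum_swap_eq {P Q : Fin d → Fin d → ℝ} (hpq : ∀ i j, P i j = Q j i) :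
    ∑ i, ∑ j, P i j = ∑ i, ∑ j, Q i j := by
  rw [Finset.sum_comm]
  exact Finset.sum_congr rfl fun i _ => Finset.sum_congr rfl fun j _ => hpq j i

lemma sum2_extract (c : ℝ) (g : Fin d → Fin d → ℝ) :
    ∑ i, ∑ j, c * g i j = c * ∑ i, ∑ j, g i j := by
  simp [Finset.mul_sum]

lemma sum1_extract (c : ℝ) (g : Fin d → ℝ) :
    ∑ i, c * g i = c * ∑ i, g i := by
  simp [Finset.mul_sum]

end Helpers

/-- If `u` is a `C^{1,2}` solution of the coefficient-frozen robust DMZ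
equation `∂u/∂t = ½ Σ aⁱʲ ∂²u/∂xᵢ∂xⱼ + Σ Fᵢ(y,x) ∂u/∂xᵢ + J(y,x) u` on `I × U`, then
`ũ(t,x) = exp(h(x)ᵀy) u(t,x)` satisfies the Kolmogorov-type equation
`∂ũ/∂t = ½ Σ ∂²(aⁱʲũ)/∂xᵢ∂xⱼ − Σ ∂(fᵢũ)/∂xᵢ − ½|h|²ũ`. -/
theorem statement14 {d : ℕ}
    (a : Fin d → Fin d → EuclideanSpace ℝ (Fin d) → ℝ)
    (f h : EuclideanSpace ℝ (Fin d) → EuclideanSpace ℝ (Fin d))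
    (ha : ∀ i j, ContDiff ℝ (⊤ : ℕ∞) (a i j)) (hsym : ∀ i j x, a i j x = a j i x)
    (hf : ContDiff ℝ (⊤ : ℕ∞) f) (hh : ContDiff ℝ (⊤ : ℕ∞) h)
    (y : EuclideanSpace ℝ (Fin d))
    (I : Set ℝ) (U : Set (EuclideanSpace ℝ (Fin d))) (hU : IsOpen U)
    (u : ℝ → EuclideanSpace ℝ (Fin d) → ℝ)
    (hux : ∀ t ∈ I, ContDiffOn ℝ 2 (u t) U)
    (hpde : ∀ t ∈ I, ∀ x ∈ U,
      HasDerivAt (fun s => u s x)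
        ((1 / 2) * ∑ i, ∑ j, a i j x * pd i (pd j (u t)) x
          + ∑ i, Fcoef a f h y i x * pd i (u t) x
          + Jcoef a f h y x * u t x) t) :
    ∀ t ∈ I, ∀ x ∈ U,
      HasDerivAt (fun s => Real.exp (∑ j, h x j * y j) * u s x)
        ((1 / 2) * ∑ i, ∑ j,
            pd i (pd j (fun z => a i j z * (Real.exp (∑ k, h z k * y k) * u t z))) x
          - ∑ i, pd i (fun z => f z i * (Real.exp (∑ k, h z k * y k) * u t z)) x
          - (1 / 2) * ‖h x‖ ^ 2 * (Real.exp (∑ k, h x k * y k) * u t x)) t := by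
  intro t ht x hx
  classical
  have hk : ∀ k : Fin d, ContDiff ℝ (⊤ : ℕ∞) fun z => h z k := fun k => contDiff_euclidean.mp hh k
  have hfk : ∀ k : Fin d, ContDiff ℝ (⊤ : ℕ∞) fun z => f z k := fun k => contDiff_euclidean.mp hf k
  have hφ : ContDiff ℝ (⊤ : ℕ∞) (fun z => ∑ k, h z k * y k) :=
    ContDiff.sum fun k _ => (hk k).mul contDiff_const
  have hφdiff : Differentiable ℝ (fun z => ∑ k, h z k * y k) := hφ.differentiable (by simp)
  have he : ContDiff ℝ (⊤ : ℕ∞) (fun z => Real.exp (∑ k, h z k * y k)) := Real.contDiff_exp.comp hφ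
  have hednd : Differentiable ℝ (fun z => Real.exp (∑ k, h z k * y k)) := he.differentiable (by simp)
  have hwz : ∀ z ∈ U, ContDiffAt ℝ 2 (u t) z := fun z hz => (hux t ht).contDiffAt (hU.mem_nhds hz)
  have hwd : ∀ z ∈ U, DifferentiableAt ℝ (u t) z := fun z hz => diffAt_of_contDiffAt (hwz z hz)
  have hvd : ∀ z ∈ U, DifferentiableAt ℝ (fun z => Real.exp (∑ k, h z k * y k) * u t z) z :=
    fun z hz => (hednd z).mul (hwd z hz)
  have hφd : ∀ (z : EuclideanSpace ℝ (Fin d)) (i : Fin d),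
      pd i (fun z => ∑ k, h z k * y k) z = ∑ k, y k * pd i (fun z => h z k) z := by
    intro z i
    rw [pd_sum Finset.univ (fun k z => h z k * y k) i
      (fun k _ => ((hk k).differentiable (by simp) z).mul_const (y k))]
    refine Finset.sum_congr rfl fun k _ => ?_
    have e1 : pd i (fun z => h z k * y k) z
        = pd i (fun z => h z k) z * y k + h z k * pd i (fun _ => y k) z :=
      pd_mul i ((hk k).differentiable (by simp) z) (differentiableAt_const (y k))
    rw [e1, pd_const]; ring
  have hed : ∀ (z : EuclideanSpace ℝ (Fin d)) (i : Fin d),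
      pd i (fun z => Real.exp (∑ k, h z k * y k)) z = Real.exp (∑ k, h z k * y k) * pd i (fun z => ∑ k, h z k * y k) z :=
    fun z i => pd_exp i (hφdiff z)
  have hφd2 : ∀ i j : Fin d,
      pd i (pd j (fun z => ∑ k, h z k * y k)) x = ∑ k, y k * pd i (pd j (fun z => h z k)) x := by
    intro i j
    have hfun : pd j (fun z => ∑ k, h z k * y k) = fun z => ∑ k, y k * pd j (fun z => h z k) z :=
      funext fun z => hφd z j
    rw [hfun, pd_sum Finset.univ (fun k z => y k * pd j (fun z => h z k) z) i
      (fun k _ => (pd_diff j (hk k)).const_mul (y k))]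
    refine Finset.sum_congr rfl fun k _ => ?_
    have e1 : pd i (fun z => y k * pd j (fun z => h z k) z) x
        = pd i (fun _ => y k) x * pd j (fun z => h z k) x + y k * pd i (pd j (fun z => h z k)) x :=
      pd_mul i (differentiableAt_const (y k)) (pd_diff j (hk k))
    rw [e1, pd_const]; ring
  have hvpd : ∀ (i : Fin d), ∀ z ∈ U,
      pd i (fun z => Real.exp (∑ k, h z k * y k) * u t z) z
        = Real.exp (∑ k, h z k * y k) * (pd i (fun z => ∑ k, h z k * y k) z * u t z + pd i (u t) z) := by
    intro i z hz
    have e1 : pd i (fun z => Real.exp (∑ k, h z k * y k) * u t z) z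
        = pd i (fun z => Real.exp (∑ k, h z k * y k)) z * u t z + Real.exp (∑ k, h z k * y k) * pd i (u t) z :=
      pd_mul i (hednd z) (hwd z hz)
    rw [e1, hed z i]; ring
  have hTT : ∀ i j : Fin d,
      pd i (pd j (fun z => a i j z * (Real.exp (∑ k, h z k * y k) * u t z))) x =
      Real.exp (∑ k, h x k * y k) * u t x * (pd i (pd j (a i j)) x)
        + Real.exp (∑ k, h x k * y k) * u t x * (pd j (a i j) x * pd i (fun z => ∑ k, h z k * y k) x)
        + Real.exp (∑ k, h x k * y k) * u t x * (pd i (a i j) x * pd j (fun z => ∑ k, h z k * y k) x)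
        + Real.exp (∑ k, h x k * y k) * (pd j (a i j) x * pd i (u t) x)
        + Real.exp (∑ k, h x k * y k) * (pd i (a i j) x * pd j (u t) x)
        + Real.exp (∑ k, h x k * y k) * u t x * (a i j x * pd i (fun z => ∑ k, h z k * y k) x * pd j (fun z => ∑ k, h z k * y k) x)
        + Real.exp (∑ k, h x k * y k) * u t x * (a i j x * pd i (pd j (fun z => ∑ k, h z k * y k)) x)
        + Real.exp (∑ k, h x k * y k) * (a i j x * pd j (fun z => ∑ k, h z k * y k) x * pd i (u t) x)
        + Real.exp (∑ k, h x k * y k) * (a i j x * pd i (fun z => ∑ k, h z k * y k) x * pd j (u t) x)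
        + Real.exp (∑ k, h x k * y k) * (a i j x * pd i (pd j (u t)) x) := by
    intro i j
    have hadiff : Differentiable ℝ (a i j) := (ha i j).differentiable (by simp)
    have dv : DifferentiableAt ℝ (fun z => Real.exp (∑ k, h z k * y k) * u t z) x := hvd x hx
    have h1 : pd j (fun z => a i j z * (Real.exp (∑ k, h z k * y k) * u t z)) =ᶠ[nhds x]
        (fun z => pd j (a i j) z * (Real.exp (∑ k, h z k * y k) * u t z)
          + a i j z * (Real.exp (∑ k, h z k * y k)
              * (pd j (fun z => ∑ k, h z k * y k) z * u t z + pd j (u t) z))) := by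
      filter_upwards [hU.mem_nhds hx] with z hz
      have e1 : pd j (fun z => a i j z * (Real.exp (∑ k, h z k * y k) * u t z)) z
          = pd j (a i j) z * (Real.exp (∑ k, h z k * y k) * u t z)
            + a i j z * pd j (fun z => Real.exp (∑ k, h z k * y k) * u t z) z :=
        pd_mul j (hadiff z) (hvd z hz)
      rw [e1, hvpd j z hz]
    rw [pd_congr i h1]
    have d1 : DifferentiableAt ℝ (pd j (a i j)) x := pd_diff j (ha i j)
    have d2 : DifferentiableAt ℝ (pd j (fun z => ∑ k, h z k * y k)) x := pd_diff j hφ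
    have d3 : DifferentiableAt ℝ (pd j (u t)) x := pd_diffAt j (hwz x hx)
    have d4 : DifferentiableAt ℝ (fun z => pd j (fun z => ∑ k, h z k * y k) z * u t z + pd j (u t) z) x :=
      (d2.mul (hwd x hx)).add d3
    have d5 : DifferentiableAt ℝ
        (fun z => Real.exp (∑ k, h z k * y k) * (pd j (fun z => ∑ k, h z k * y k) z * u t z + pd j (u t) z)) x :=
      (hednd x).mul d4
    have eA : pd i (fun z => pd j (a i j) z * (Real.exp (∑ k, h z k * y k) * u t z)
          + a i j z * (Real.exp (∑ k, h z k * y k)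
              * (pd j (fun z => ∑ k, h z k * y k) z * u t z + pd j (u t) z))) x
        = pd i (fun z => pd j (a i j) z * (Real.exp (∑ k, h z k * y k) * u t z)) x
          + pd i (fun z => a i j z * (Real.exp (∑ k, h z k * y k)
              * (pd j (fun z => ∑ k, h z k * y k) z * u t z + pd j (u t) z))) x :=
      pd_add i (d1.mul dv) ((hadiff x).mul d5)
    have eB : pd i (fun z => pd j (a i j) z * (Real.exp (∑ k, h z k * y k) * u t z)) x
        = pd i (pd j (a i j)) x * (Real.exp (∑ k, h x k * y k) * u t x)
          + pd j (a i j) x * pd i (fun z => Real.exp (∑ k, h z k * y k) * u t z) x :=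
      pd_mul i d1 dv
    have eC : pd i (fun z => a i j z * (Real.exp (∑ k, h z k * y k)
          * (pd j (fun z => ∑ k, h z k * y k) z * u t z + pd j (u t) z))) x
        = pd i (a i j) x * (Real.exp (∑ k, h x k * y k)
            * (pd j (fun z => ∑ k, h z k * y k) x * u t x + pd j (u t) x))
          + a i j x * pd i (fun z => Real.exp (∑ k, h z k * y k)
              * (pd j (fun z => ∑ k, h z k * y k) z * u t z + pd j (u t) z)) x :=
      pd_mul i (hadiff x) d5
    have eD : pd i (fun z => Real.exp (∑ k, h z k * y k)
          * (pd j (fun z => ∑ k, h z k * y k) z * u t z + pd j (u t) z)) x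
        = pd i (fun z => Real.exp (∑ k, h z k * y k)) x * (pd j (fun z => ∑ k, h z k * y k) x * u t x + pd j (u t) x)
          + Real.exp (∑ k, h x k * y k)
            * pd i (fun z => pd j (fun z => ∑ k, h z k * y k) z * u t z + pd j (u t) z) x :=
      pd_mul i (hednd x) d4
    have eE : pd i (fun z => pd j (fun z => ∑ k, h z k * y k) z * u t z + pd j (u t) z) x
        = pd i (fun z => pd j (fun z => ∑ k, h z k * y k) z * u t z) x + pd i (pd j (u t)) x :=
      pd_add i (d2.mul (hwd x hx)) d3
    have eF : pd i (fun z => pd j (fun z => ∑ k, h z k * y k) z * u t z) x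
        = pd i (pd j (fun z => ∑ k, h z k * y k)) x * u t x + pd j (fun z => ∑ k, h z k * y k) x * pd i (u t) x :=
      pd_mul i d2 (hwd x hx)
    rw [eA, eB, eC, eD, eE, eF, hvpd i x hx, hed x i]
    ring
  have hSS : ∀ i : Fin d,
      pd i (fun z => f z i * (Real.exp (∑ k, h z k * y k) * u t z)) x =
      Real.exp (∑ k, h x k * y k) * u t x * (pd i (fun z => f z i) x) + Real.exp (∑ k, h x k * y k) * u t x * (f x i * pd i (fun z => ∑ k, h z k * y k) x) + Real.exp (∑ k, h x k * y k) * (f x i * pd i (u t) x) := by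
    intro i
    have e1 : pd i (fun z => f z i * (Real.exp (∑ k, h z k * y k) * u t z)) x
        = pd i (fun z => f z i) x * (Real.exp (∑ k, h x k * y k) * u t x)
          + f x i * pd i (fun z => Real.exp (∑ k, h z k * y k) * u t z) x :=
      pd_mul i ((hfk i).differentiable (by simp) x) (hvd x hx)
    rw [e1, hvpd i x hx]; ring
  have e1 : ∑ i, ∑ j,
      pd i (pd j (fun z => a i j z * (Real.exp (∑ k, h z k * y k) * u t z))) x
      = ∑ i, ∑ j, (Real.exp (∑ k, h x k * y k) * u t x * (pd i (pd j (a i j)) x)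
        + Real.exp (∑ k, h x k * y k) * u t x * (pd j (a i j) x * pd i (fun z => ∑ k, h z k * y k) x)
        + Real.exp (∑ k, h x k * y k) * u t x * (pd i (a i j) x * pd j (fun z => ∑ k, h z k * y k) x)
        + Real.exp (∑ k, h x k * y k) * (pd j (a i j) x * pd i (u t) x)
        + Real.exp (∑ k, h x k * y k) * (pd i (a i j) x * pd j (u t) x)
        + Real.exp (∑ k, h x k * y k) * u t x * (a i j x * pd i (fun z => ∑ k, h z k * y k) x * pd j (fun z => ∑ k, h z k * y k) x)
        + Real.exp (∑ k, h x k * y k) * u t x * (a i j x * pd i (pd j (fun z => ∑ k, h z k * y k)) x)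
        + Real.exp (∑ k, h x k * y k) * (a i j x * pd j (fun z => ∑ k, h z k * y k) x * pd i (u t) x)
        + Real.exp (∑ k, h x k * y k) * (a i j x * pd i (fun z => ∑ k, h z k * y k) x * pd j (u t) x)
        + Real.exp (∑ k, h x k * y k) * (a i j x * pd i (pd j (u t)) x)) :=
    Finset.sum_congr rfl fun i _ => Finset.sum_congr rfl fun j _ => hTT i j
  have e2 : ∑ i, pd i (fun z => f z i * (Real.exp (∑ k, h z k * y k) * u t z)) x
      = ∑ i, (Real.exp (∑ k, h x k * y k) * u t x * (pd i (fun z => f z i) x) + Real.exp (∑ k, h x k * y k) * u t x * (f x i * pd i (fun z => ∑ k, h z k * y k) x) + Real.exp (∑ k, h x k * y k) * (f x i * pd i (u t) x)) :=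
    Finset.sum_congr rfl fun i _ => hSS i
  have hJ1 : ∀ i j : Fin d,
      (∑ k, y k * pd j (fun z => h z k) x * pd i (a i j) x)
        = pd j (fun z => ∑ k, h z k * y k) x * pd i (a i j) x := by
    intro i j
    rw [← Finset.sum_mul, ← hφd x j]
  have hJ2 : ∀ i j : Fin d,
      (∑ k, ∑ l, y k * pd i (fun z => h z k) x * (y l * pd j (fun z => h z l) x))
        = pd i (fun z => ∑ k, h z k * y k) x * pd j (fun z => ∑ k, h z k * y k) x := by
    intro i j
    rw [hφd x i, hφd x j, Finset.sum_mul_sum]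
  have hJ3 : ∀ i : Fin d,
      (∑ j, y j * pd i (fun z => h z j) x * f x i) = pd i (fun z => ∑ k, h z k * y k) x * f x i := by
    intro i
    rw [← Finset.sum_mul, ← hφd x i]
  have haf : ∀ i j : Fin d, a j i = a i j := fun i j => funext fun z => hsym j i z
  -- swap identities
  have sw2 : (∑ i, ∑ j, pd i (a i j) x * pd j (fun z => ∑ k, h z k * y k) x) = ∑ i, ∑ j, pd j (a i j) x * pd i (fun z => ∑ k, h z k * y k) x := by
    refine sum_swap_eq fun i j => ?_
    rw [haf i j]
  have sw3 : (∑ i, ∑ j, pd i (a i j) x * pd j (u t) x) = ∑ i, ∑ j, pd j (a i j) x * pd i (u t) x := by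
    refine sum_swap_eq fun i j => ?_
    rw [haf i j]
  have sw6 : (∑ i, ∑ j, a i j x * pd i (fun z => ∑ k, h z k * y k) x * pd j (u t) x) = ∑ i, ∑ j, a i j x * pd j (fun z => ∑ k, h z k * y k) x * pd i (u t) x := by
    refine sum_swap_eq fun i j => ?_
    rw [hsym i j x]
  -- split the expanded double sum into canonical atoms
  have sA : (∑ i, ∑ j, (Real.exp (∑ k, h x k * y k) * u t x * (pd i (pd j (a i j)) x)
        + Real.exp (∑ k, h x k * y k) * u t x * (pd j (a i j) x * pd i (fun z => ∑ k, h z k * y k) x)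
        + Real.exp (∑ k, h x k * y k) * u t x * (pd i (a i j) x * pd j (fun z => ∑ k, h z k * y k) x)
        + Real.exp (∑ k, h x k * y k) * (pd j (a i j) x * pd i (u t) x)
        + Real.exp (∑ k, h x k * y k) * (pd i (a i j) x * pd j (u t) x)
        + Real.exp (∑ k, h x k * y k) * u t x * (a i j x * pd i (fun z => ∑ k, h z k * y k) x * pd j (fun z => ∑ k, h z k * y k) x)
        + Real.exp (∑ k, h x k * y k) * u t x * (a i j x * pd i (pd j (fun z => ∑ k, h z k * y k)) x)
        + Real.exp (∑ k, h x k * y k) * (a i j x * pd j (fun z => ∑ k, h z k * y k) x * pd i (u t) x)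
        + Real.exp (∑ k, h x k * y k) * (a i j x * pd i (fun z => ∑ k, h z k * y k) x * pd j (u t) x)
        + Real.exp (∑ k, h x k * y k) * (a i j x * pd i (pd j (u t)) x))) = Real.exp (∑ k, h x k * y k) * u t x * (∑ i, ∑ j, pd i (pd j (a i j)) x) + Real.exp (∑ k, h x k * y k) * u t x * (∑ i, ∑ j, pd j (a i j) x * pd i (fun z => ∑ k, h z k * y k) x) + Real.exp (∑ k, h x k * y k) * u t x * (∑ i, ∑ j, pd i (a i j) x * pd j (fun z => ∑ k, h z k * y k) x) + Real.exp (∑ k, h x k * y k) * (∑ i, ∑ j, pd j (a i j) x * pd i (u t) x) + Real.exp (∑ k, h x k * y k) * (∑ i, ∑ j, pd i (a i j) x * pd j (u t) x) + Real.exp (∑ k, h x k * y k) * u t x * (∑ i, ∑ j, a i j x * pd i (fun z => ∑ k, h z k * y k) x * pd j (fun z => ∑ k, h z k * y k) x) + Real.exp (∑ k, h x k * y k) * u t x * (∑ i, ∑ j, a i j x * pd i (pd j (fun z => ∑ k, h z k * y k)) x) + Real.exp (∑ k, h x k * y k) * (∑ i, ∑ j, a i j x * pd j (fun z => ∑ k,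 h z k * y k) x * pd i (u t) x) + Real.exp (∑ k, h x k * y k) * (∑ i, ∑ j, a i j x * pd i (fun z => ∑ k, h z k * y k) x * pd j (u t) x) + Real.exp (∑ k, h x k * y k) * (∑ i, ∑ j, a i j x * pd i (pd j (u t)) x) := by
    have sp : (∑ i, ∑ j, (Real.exp (∑ k, h x k * y k) * u t x * (pd i (pd j (a i j)) x)
        + Real.exp (∑ k, h x k * y k) * u t x * (pd j (a i j) x * pd i (fun z => ∑ k, h z k * y k) x)
        + Real.exp (∑ k, h x k * y k) * u t x * (pd i (a i j) x * pd j (fun z => ∑ k, h z k * y k) x)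
        + Real.exp (∑ k, h x k * y k) * (pd j (a i j) x * pd i (u t) x)
        + Real.exp (∑ k, h x k * y k) * (pd i (a i j) x * pd j (u t) x)
        + Real.exp (∑ k, h x k * y k) * u t x * (a i j x * pd i (fun z => ∑ k, h z k * y k) x * pd j (fun z => ∑ k, h z k * y k) x)
        + Real.exp (∑ k, h x k * y k) * u t x * (a i j x * pd i (pd j (fun z => ∑ k, h z k * y k)) x)
        + Real.exp (∑ k, h x k * y k) * (a i j x * pd j (fun z => ∑ k, h z k * y k) x * pd i (u t) x)
        + Real.exp (∑ k, h x k * y k) * (a i j x * pd i (fun z => ∑ k, h z k * y k) x * pd j (u t) x)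
        + Real.exp (∑ k, h x k * y k) * (a i j x * pd i (pd j (u t)) x))) = (∑ i, ∑ j, Real.exp (∑ k, h x k * y k) * u t x * (pd i (pd j (a i j)) x)) + (∑ i, ∑ j, Real.exp (∑ k, h x k * y k) * u t x * (pd j (a i j) x * pd i (fun z => ∑ k, h z k * y k) x)) + (∑ i, ∑ j, Real.exp (∑ k, h x k * y k) * u t x * (pd i (a i j) x * pd j (fun z => ∑ k, h z k * y k) x)) + (∑ i, ∑ j, Real.exp (∑ k, h x k * y k) * (pd j (a i j) x * pd i (u t) x)) + (∑ i, ∑ j, Real.exp (∑ k, h x k * y k) * (pd i (a i j) x * pd j (u t) x)) + (∑ i, ∑ j, Real.exp (∑ k, h x k * y k) * u t x * (a i j x * pd i (fun z => ∑ k, h z k * y k) x * pd j (fun z => ∑ k, h z k * y k) x)) + (∑ i, ∑ j, Real.exp (∑ k, h x k * y k) * u t x * (a i j x * pd i (pd j (fun z => ∑ k, h z k * y k)) x)) + (∑ i, ∑ j, Real.exp (∑ k, h x k * y k) * (a i j x * pd j (fun z => ∑ k, h z k * y k) x * pd i (u t) x)) + (∑ i, ∑ j, Real.exp (∑ k, h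 x k * y k) * (a i j x * pd i (fun z => ∑ k, h z k * y k) x * pd j (u t) x)) + (∑ i, ∑ j, Real.exp (∑ k, h x k * y k) * (a i j x * pd i (pd j (u t)) x)) := by
      simp only [Finset.sum_add_distrib]
    have ex0 : (∑ i, ∑ j, Real.exp (∑ k, h x k * y k) * u t x * (pd i (pd j (a i j)) x)) = Real.exp (∑ k, h x k * y k) * u t x * (∑ i, ∑ j, pd i (pd j (a i j)) x) := sum2_extract _ _
    have ex1 : (∑ i, ∑ j, Real.exp (∑ k, h x k * y k) * u t x * (pd j (a i j) x * pd i (fun z => ∑ k, h z k * y k) x)) = Real.exp (∑ k, h x k * y k) * u t x * (∑ i, ∑ j, pd j (a i j) x * pd i (fun z => ∑ k, h z k * y k) x) := sum2_extract _ _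
    have ex2 : (∑ i, ∑ j, Real.exp (∑ k, h x k * y k) * u t x * (pd i (a i j) x * pd j (fun z => ∑ k, h z k * y k) x)) = Real.exp (∑ k, h x k * y k) * u t x * (∑ i, ∑ j, pd i (a i j) x * pd j (fun z => ∑ k, h z k * y k) x) := sum2_extract _ _
    have ex3 : (∑ i, ∑ j, Real.exp (∑ k, h x k * y k) * (pd j (a i j) x * pd i (u t) x)) = Real.exp (∑ k, h x k * y k) * (∑ i, ∑ j, pd j (a i j) x * pd i (u t) x) := sum2_extract _ _
    have ex4 : (∑ i, ∑ j, Real.exp (∑ k, h x k * y k) * (pd i (a i j) x * pd j (u t) x)) = Real.exp (∑ k, h x k * y k) * (∑ i, ∑ j, pd i (a i j) x * pd j (u t) x) := sum2_extract _ _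
    have ex5 : (∑ i, ∑ j, Real.exp (∑ k, h x k * y k) * u t x * (a i j x * pd i (fun z => ∑ k, h z k * y k) x * pd j (fun z => ∑ k, h z k * y k) x)) = Real.exp (∑ k, h x k * y k) * u t x * (∑ i, ∑ j, a i j x * pd i (fun z => ∑ k, h z k * y k) x * pd j (fun z => ∑ k, h z k * y k) x) := sum2_extract _ _
    have ex6 : (∑ i, ∑ j, Real.exp (∑ k, h x k * y k) * u t x * (a i j x * pd i (pd j (fun z => ∑ k, h z k * y k)) x)) = Real.exp (∑ k, h x k * y k) * u t x * (∑ i, ∑ j, a i j x * pd i (pd j (fun z => ∑ k, h z k * y k)) x) := sum2_extract _ _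
    have ex7 : (∑ i, ∑ j, Real.exp (∑ k, h x k * y k) * (a i j x * pd j (fun z => ∑ k, h z k * y k) x * pd i (u t) x)) = Real.exp (∑ k, h x k * y k) * (∑ i, ∑ j, a i j x * pd j (fun z => ∑ k, h z k * y k) x * pd i (u t) x) := sum2_extract _ _
    have ex8 : (∑ i, ∑ j, Real.exp (∑ k, h x k * y k) * (a i j x * pd i (fun z => ∑ k, h z k * y k) x * pd j (u t) x)) = Real.exp (∑ k, h x k * y k) * (∑ i, ∑ j, a i j x * pd i (fun z => ∑ k, h z k * y k) x * pd j (u t) x) := sum2_extract _ _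
    have ex9 : (∑ i, ∑ j, Real.exp (∑ k, h x k * y k) * (a i j x * pd i (pd j (u t)) x)) = Real.exp (∑ k, h x k * y k) * (∑ i, ∑ j, a i j x * pd i (pd j (u t)) x) := sum2_extract _ _
    rw [sp, ex0, ex1, ex2, ex3, ex4, ex5, ex6, ex7, ex8, ex9]
  have sB : (∑ i, (Real.exp (∑ k, h x k * y k) * u t x * (pd i (fun z => f z i) x) + Real.exp (∑ k, h x k * y k) * u t x * (f x i * pd i (fun z => ∑ k, h z k * y k) x) + Real.exp (∑ k, h x k * y k) * (f x i * pd i (u t) x))) = Real.exp (∑ k, h x k * y k) * u t x * (∑ i, pd i (fun z => f z i) x) + Real.exp (∑ k, h x k * y k) * u t x * (∑ i, f x i * pd i (fun z => ∑ k, h z k * y k) x) + Real.exp (∑ k, h x k * y k) * (∑ i, f x i * pd i (u t) x) := by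
    have sp : (∑ i, (Real.exp (∑ k, h x k * y k) * u t x * (pd i (fun z => f z i) x) + Real.exp (∑ k, h x k * y k) * u t x * (f x i * pd i (fun z => ∑ k, h z k * y k) x) + Real.exp (∑ k, h x k * y k) * (f x i * pd i (u t) x))) = (∑ i, Real.exp (∑ k, h x k * y k) * u t x * (pd i (fun z => f z i) x)) + (∑ i, Real.exp (∑ k, h x k * y k) * u t x * (f x i * pd i (fun z => ∑ k, h z k * y k) x)) + (∑ i, Real.exp (∑ k, h x k * y k) * (f x i * pd i (u t) x)) := by
      simp only [Finset.sum_add_distrib]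
    have ey0 : (∑ i, Real.exp (∑ k, h x k * y k) * u t x * (pd i (fun z => f z i) x)) = Real.exp (∑ k, h x k * y k) * u t x * (∑ i, pd i (fun z => f z i) x) := sum1_extract _ _
    have ey1 : (∑ i, Real.exp (∑ k, h x k * y k) * u t x * (f x i * pd i (fun z => ∑ k, h z k * y k) x)) = Real.exp (∑ k, h x k * y k) * u t x * (∑ i, f x i * pd i (fun z => ∑ k, h z k * y k) x) := sum1_extract _ _
    have ey2 : (∑ i, Real.exp (∑ k, h x k * y k) * (f x i * pd i (u t) x)) = Real.exp (∑ k, h x k * y k) * (∑ i, f x i * pd i (u t) x) := sum1_extract _ _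
    rw [sp, ey0, ey1, ey2]
  -- canonical form of the DMZ right-hand side pieces
  have hD2 : (∑ i, Fcoef a f h y i x * pd i (u t) x)
      = (∑ i, ∑ j, pd j (a i j) x * pd i (u t) x) + (∑ i, ∑ j, a i j x * pd j (fun z => ∑ k, h z k * y k) x * pd i (u t) x) - (∑ i, f x i * pd i (u t) x) := by
    have step1 : ∀ i : Fin d, Fcoef a f h y i x * pd i (u t) x
        = (∑ j, (pd j (a i j) x * pd i (u t) x + a i j x * pd j (fun z => ∑ k, h z k * y k) x * pd i (u t) x)) - f x i * pd i (u t) x := by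
      intro i
      simp only [Fcoef]
      have hin : (∑ j, (pd j (a i j) x + a i j x * ∑ k, y k * pd j (fun z => h z k) x))
          = ∑ j, (pd j (a i j) x + a i j x * pd j (fun z => ∑ k, h z k * y k) x) :=
        Finset.sum_congr rfl fun j _ => by rw [← hφd x j]
      rw [hin, sub_mul, Finset.sum_mul]
      congr 1
      exact Finset.sum_congr rfl fun j _ => by ring
    calc (∑ i, Fcoef a f h y i x * pd i (u t) x)
        = ∑ i, ((∑ j, (pd j (a i j) x * pd i (u t) x + a i j x * pd j (fun z => ∑ k, h z k * y k) x * pd i (u t) x)) - f x i * pd i (u t) x) :=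
          Finset.sum_congr rfl fun i _ => step1 i
      _ = (∑ i, ∑ j, pd j (a i j) x * pd i (u t) x) + (∑ i, ∑ j, a i j x * pd j (fun z => ∑ k, h z k * y k) x * pd i (u t) x) - (∑ i, f x i * pd i (u t) x) := by
          simp only [Finset.sum_sub_distrib, Finset.sum_add_distrib]
  have hD3 : Jcoef a f h y x
      = (1 / 2) * (∑ i, ∑ j, pd i (pd j (a i j)) x) + (∑ i, ∑ j, pd i (a i j) x * pd j (fun z => ∑ k, h z k * y k) x) + (1 / 2) * ((∑ i, ∑ j, a i j x * pd i (pd j (fun z => ∑ k, h z k * y k)) x) + (∑ i, ∑ j, a i j x * pd i (fun z => ∑ k, h z k * y k) x * pd j (fun z => ∑ k, h z k * y k) x))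
        - (∑ i, pd i (fun z => f z i) x) - (∑ i, f x i * pd i (fun z => ∑ k, h z k * y k) x) - (1 / 2) * ‖h x‖ ^ 2 := by
    simp only [Jcoef]
    have j2 : (∑ i, ∑ j, ∑ k, y k * pd j (fun z => h z k) x * pd i (a i j) x)
        = ∑ i, ∑ j, pd i (a i j) x * pd j (fun z => ∑ k, h z k * y k) x :=
      Finset.sum_congr rfl fun i _ => Finset.sum_congr rfl fun j _ => by
        rw [hJ1 i j]; ring
    have j3 : (∑ i, ∑ j, a i j x *
          ((∑ k, y k * pd i (pd j (fun z => h z k)) x)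
            + ∑ k, ∑ l, y k * y l * pd i (fun z => h z k) x * pd j (fun z => h z l) x))
        = (∑ i, ∑ j, a i j x * pd i (pd j (fun z => ∑ k, h z k * y k)) x) + (∑ i, ∑ j, a i j x * pd i (fun z => ∑ k, h z k * y k) x * pd j (fun z => ∑ k, h z k * y k) x) := by
      have : (∑ i, ∑ j, a i j x *
          ((∑ k, y k * pd i (pd j (fun z => h z k)) x)
            + ∑ k, ∑ l, y k * y l * pd i (fun z => h z k) x * pd j (fun z => h z l) x))
          = ∑ i, ∑ j, ((a i j x * pd i (pd j (fun z => ∑ k, h z k * y k)) x) + (a i j x * pd i (fun z => ∑ k, h z k * y k) x * pd j (fun z => ∑ k, h z k * y k) x)) := by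
        refine Finset.sum_congr rfl fun i _ => Finset.sum_congr rfl fun j _ => ?_
        have hq : (∑ k, ∑ l, y k * y l * pd i (fun z => h z k) x * pd j (fun z => h z l) x)
            = pd i (fun z => ∑ k, h z k * y k) x * pd j (fun z => ∑ k, h z k * y k) x := by
          rw [← hJ2 i j]
          exact Finset.sum_congr rfl fun k _ => Finset.sum_congr rfl fun l _ => by ring
        rw [← hφd2 i j, hq]; ring
      rw [this]
      simp only [Finset.sum_add_distrib]
    have j5 : (∑ i, ∑ j, y j * pd i (fun z => h z j) x * f x i) = ∑ i, f x i * pd i (fun z => ∑ k, h z k * y k) x :=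
      Finset.sum_congr rfl fun i _ => by rw [hJ3 i]; ring
    rw [j2, j3, j5]
  -- the key scalar identity
  have key : (1 / 2) * ∑ i, ∑ j,
        pd i (pd j (fun z => a i j z * (Real.exp (∑ k, h z k * y k) * u t z))) x
      - ∑ i, pd i (fun z => f z i * (Real.exp (∑ k, h z k * y k) * u t z)) x
      - (1 / 2) * ‖h x‖ ^ 2 * (Real.exp (∑ k, h x k * y k) * u t x)
      = Real.exp (∑ k, h x k * y k) *
        ((1 / 2) * ∑ i, ∑ j, a i j x * pd i (pd j (u t)) x
          + ∑ i, Fcoef a f h y i x * pd i (u t) x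
          + Jcoef a f h y x * u t x) := by
    rw [e1, e2, sA, sB, hD2, hD3, sw2, sw3, sw6]
    ring
  rw [key]
  exact (hpde t ht x hx).const_mul (Real.exp (∑ k, h x k * y k))
end
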